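/- In the resource-constrained monopoly version of M_X — where the firm can make nonzero offers g(x) ∈ {0, 3/2} to at most i < |X| candidates, and all candidates' outside options are 0 (payoff −1 on rejection) — no equilibrium in which the firm offers 3/2 to exactly i candidates is blatantly unfair with respect to any candidate: for any candidate x receiving payoff ≤ 0, any alternative equilibrium giving x positive payoff must remove the offer from some other candidate x', whose payoff then drops from 1/2 to −1 < 0, violating the condition that every other player's payoff either weakly improves or stays positive. -/
import Mathlib


/-- Candidate `x`'s payoff in the resource-constrained monopoly version of `M_X`, when
the set of candidates offered `3/2` (all of whom accept) is `S`: a candidate offered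
`3/2` gets `1/2`; a candidate offered `0` or nothing gets `-1` (all outside options
are `0`, i.e. rejection payoff `-1`). -/
noncomputable def monopolyPayoff {X : Type*} [DecidableEq X] (S : Finset X) (x : X) : ℝ :=
  if x ∈ S then 1/2 else -1

/-- **Monopolies admit no blatant unfairness.** In the resource-constrained monopoly
version of `M_X` — offers in `{0, 3/2}`, at most `i < |X|` nonzero offers, all outside
options `0` — no equilibrium in which the firm offers `3/2` to exactly `i` candidates is
blatantly unfair with respect to any candidate: for any candidate `x` receiving payoff
`≤ 0`, there is no alternative equilibrium (a set `S'` of at most `i` offers) giving `x`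
positive payoff in which every other candidate's payoff is at least as high as before or
positive. -/
theorem monopoly_no_blatant_unfairness
    {X : Type*} [Fintype X] [DecidableEq X]
    (i : ℕ) (hi : i < Fintype.card X)
    (S : Finset X) (hS : S.card = i) :
    ∀ x : X, monopolyPayoff S x ≤ 0 →
      ¬ ∃ S' : Finset X, S'.card ≤ i ∧ monopolyPayoff S' x > 0 ∧
          ∀ x' : X, x' ≠ x →
            (monopolyPayoff S' x' ≥ monopolyPayoff S x' ∨ monopolyPayoff S' x' > 0) := by
  intro x hx
  rintro ⟨S', hcard, hxpos, hall⟩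
  have hxS : x ∉ S := by
    intro h
    simp [monopolyPayoff, h] at hx
    norm_num at hx
  have hxS' : x ∈ S' := by
    by_contra h
    simp [monopolyPayoff, h] at hxpos
    norm_num at hxpos
  -- there is x' ∈ S with x' ∉ S'
  have hnot : ¬ S ⊆ S' := by
    intro hsub
    have : (insert x S).card ≤ S'.card := Finset.card_le_card (Finset.insert_subset hxS' hsub)
    rw [Finset.card_insert_of_notMem hxS, hS] at this
    omega
  obtain ⟨x', hx'S, hx'S'⟩ := Finset.not_subset.mp hnot
  have hne : x' ≠ x := fun h => hxS (h ▸ hx'S)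
  rcases hall x' hne with h | h <;>
    simp [monopolyPayoff, hx'S, hx'S'] at h <;> norm_num at h
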